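/- Let χ ∈ W have lowest index m and let n ∈ {m+2, m+4, …}. Then the exact cancellation identity Â⁻_{n,n}χ_n + Â⁺_{n−2}χ_{n−2} = 1_{D_{n−1}×ℝ³} · Â⁺_{n−2}χ_{n−2} holds (as functions of (k₁,…,k_{n−1};p), almost everywhere). In particular, since D_{n−1} = ∅ for n ≥ m+4, Â⁻_{n,n}χ_n + Â⁺_{n−2}χ_{n−2} = 0 for all n ≥ m+4. -/

import Mathlib

open MeasureTheory ENNReal

noncomputable section

/-- Momentum space `ℝ³`. -/
abbrev R3 : Type := EuclideanSpace ℝ (Fin 3)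

/-- `pfun k = p_{n+1}(k₁,…,k_n) = e^{n+1} ∏_{i=1}^{n} (|k_i|² + 1)²` for `k : Fin n → ℝ³`. -/
def pfun {n : ℕ} (k : Fin n → R3) : ℝ :=
  Real.exp (n + 1) * ∏ i, (‖k i‖ ^ 2 + 1) ^ 2

/-- `Eset n = E_{n+1} ⊆ (ℝ³)^{n+1}`:
`exp(p_{n+1}(k₁,…,k_n)/2) < |k_{n+1}| < exp(p_{n+1}(k₁,…,k_n))`. -/
def Eset (n : ℕ) : Set (Fin (n + 1) → R3) :=
  {k | Real.exp (pfun (fun i : Fin n => k i.castSucc) / 2) < ‖k (Fin.last n)‖ ∧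
       ‖k (Fin.last n)‖ < Real.exp (pfun (fun i : Fin n => k i.castSucc))}

/-- The symmetrizer `𝒮` on subsets of `(ℝ³)^n`: all tuples having a permutation in `X`. -/
def symmSet {n : ℕ} (X : Set (Fin n → R3)) : Set (Fin n → R3) :=
  {k | ∃ σ : Equiv.Perm (Fin n), (k ∘ σ) ∈ X}

/-- `extendSet X = X × ℝ³ ⊆ (ℝ³)^{n+1}` for `X ⊆ (ℝ³)^n`. -/
def extendSet {n : ℕ} (X : Set (Fin n → R3)) : Set (Fin (n + 1) → R3) :=
  {k | (fun i : Fin n => k i.castSucc) ∈ X}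

/-- `Fset n = F_{n+1}`: `F₁ = ∅`, `F_{n} = 𝒮((F_{n−1}^∁ × ℝ³) ∩ E_n)`. -/
def Fset : (n : ℕ) → Set (Fin (n + 1) → R3)
  | 0 => ∅
  | n + 1 => symmSet (extendSet (Fset n)ᶜ ∩ Eset (n + 1))

/-- A representative of a vector of the Fock space: component `n` is a function of
`(k₁,…,k_n; p)`, i.e. of `n + 1` points of `ℝ³`. -/
abbrev FockRep : Type := (n : ℕ) → (Fin (n + 1) → R3) → ℂ

/-- Remove the `i`-th entry of a tuple. -/
def removeAt {n : ℕ} (i : Fin (n + 1)) (f : Fin (n + 1) → R3) : Fin n → R3 :=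
  fun j => f (i.succAbove j)

/-- `Â⁺_m` : `(Â⁺_m ψ)(k₁,…,k_{m+1};p) = (m+1)^{-1/2} ∑_i |k_i|^{-1/2} ψ(…,k̂_i,…; p + k_i)`. -/
def Aplus (m : ℕ) (ψ : (Fin (m + 1) → R3) → ℂ) : (Fin (m + 2) → R3) → ℂ :=
  fun x =>
    (Real.sqrt (m + 1) : ℂ)⁻¹ *
      ∑ i : Fin (m + 1),
        (Real.sqrt ‖x i.castSucc‖ : ℂ)⁻¹ *
          ψ (Fin.snoc (removeAt i fun j : Fin (m + 1) => x j.castSucc)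
              (x (Fin.last (m + 1)) + x i.castSucc))

/-- `Aminus t = Â⁻_{t+1}` : the full annihilation-type operator. -/
def Aminus (t : ℕ) (ψ : (Fin (t + 2) → R3) → ℂ) : (Fin (t + 1) → R3) → ℂ :=
  fun x =>
    (Real.sqrt (t + 1) : ℂ)⁻¹ *
      ∑ i : Fin (t + 1),
        ∫ w : R3, (Real.sqrt ‖w‖ : ℂ)⁻¹ *
          ψ (Fin.snoc (Fin.insertNth i w fun j : Fin t => x j.castSucc)
              (x (Fin.last t) - w))

/-- `AminusL t l = Â⁻_{t+1, l}` : the single term of `Â⁻_{t+1}` where the integration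
variable is inserted at position `l`. -/
def AminusL (t : ℕ) (l : Fin (t + 1)) (ψ : (Fin (t + 2) → R3) → ℂ) :
    (Fin (t + 1) → R3) → ℂ :=
  fun x =>
    (Real.sqrt (t + 1) : ℂ)⁻¹ *
      ∫ w : R3, (Real.sqrt ‖w‖ : ℂ)⁻¹ *
        ψ (Fin.snoc (Fin.insertNth l w fun j : Fin t => x j.castSucc)
            (x (Fin.last t) - w))

/-- `Â⁻_m χ_m`, with `Â⁻₀ := 0`. -/
def AminusComp : (m : ℕ) → ((Fin (m + 1) → R3) → ℂ) → (Fin m → R3) → ℂ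
  | 0, _ => 0
  | t + 1, ψ => Aminus t ψ

/-- The full (formal) operator `Â` : `(Âψ)_n = Â⁺_{n−1}ψ_{n−1} + Â⁻_{n+1}ψ_{n+1}`,
with `Â⁺_{−1} := 0`. -/
def Aop (ψ : FockRep) : FockRep := fun n =>
  match n with
  | 0 => Aminus 0 (ψ 1)
  | n + 1 => fun x => Aplus n (ψ n) x + Aminus (n + 1) (ψ (n + 2)) x

/-- `Tset n` is the set whose indicator gives `1_T` on component `n`:
`∅` for `n = 0` and `F_n × ℝ³` for `n ≥ 1`. -/
def Tset : (n : ℕ) → Set (Fin (n + 1) → R3)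
  | 0 => ∅
  | n + 1 => extendSet (Fset n)

/-- The operator `1_T`. -/
def oneT (ψ : FockRep) : FockRep := fun n => (Tset n).indicator (ψ n)

/-- The operator `1_{T^∁}`. -/
def oneTc (ψ : FockRep) : FockRep := fun n => ((Tset n)ᶜ).indicator (ψ n)

/-- The operator `Â⁺`: `(Â⁺ψ)_n = Â⁺_{n−1}ψ_{n−1}`, `(Â⁺ψ)₀ = 0`. -/
def AplusOp (ψ : FockRep) : FockRep := fun n =>
  match n with
  | 0 => 0
  | n + 1 => Aplus n (ψ n)

/-- `‖ψ‖² = ∑_n ‖ψ_n‖²_{L²}` (in `ℝ≥0∞`). -/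
def HnormSq (ψ : FockRep) : ℝ≥0∞ := ∑' n, eLpNorm (ψ n) 2 volume ^ 2

/-- Membership in the Hilbert space `H`. -/
def memH (ψ : FockRep) : Prop := (∀ n, MemLp (ψ n) 2 volume) ∧ HnormSq ψ < ⊤

/-- `‖1_T Â⁺ 1_{T^∁} ψ‖²`. -/
def VnormSq (ψ : FockRep) : ℝ≥0∞ := HnormSq (oneT (AplusOp (oneTc ψ)))

/-- `ψ ∈ U`, i.e. `ψ ∈ H` and `Âψ ∈ H`. -/
def memU (ψ : FockRep) : Prop := memH ψ ∧ memH (Aop ψ)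

/-- `ψ ∈ V`, i.e. `ψ ∈ H` and `‖1_T Â⁺ 1_{T^∁} ψ‖ < ∞`. -/
def memV (ψ : FockRep) : Prop := memH ψ ∧ VnormSq ψ < ⊤

/-- The inner product of `H` (conjugate-linear in the first argument). -/
def Hinner (φ ψ : FockRep) : ℂ := ∑' n, ∫ x, (starRingEnd ℂ) (φ n x) * ψ n x

/-- `‖φ − ψ‖²`. -/
def distSq (φ ψ : FockRep) : ℝ≥0∞ :=
  ∑' n, eLpNorm (fun x => φ n x - ψ n x) 2 volume ^ 2

/-- `χ_{n,j}` for `n = t + 2`: the `j`-th term of the recursion formula defining members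
of `W` in terms of `prev = χ_{n−2}`, with vanishing-set `Dset = D_{n−1}`. -/
def chiTerm (t : ℕ) (Dset : Set (Fin (t + 1) → R3)) (prev : (Fin (t + 1) → R3) → ℂ)
    (j : Fin (t + 1)) : (Fin (t + 3) → R3) → ℂ :=
  fun x =>
    let kk : Fin (t + 2) → R3 := fun i => x i.castSucc
    let p : R3 := x (Fin.last (t + 2))
    let kf : Fin (t + 1) → R3 := fun i => kk i.castSucc
    let kn : R3 := kk (Fin.last (t + 1))
    (((-Real.sqrt (t + 2) * (Eset (t + 1)).indicator (fun _ => (1 : ℝ)) kk *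
          Dsetᶜ.indicator (fun _ => (1 : ℝ)) kf) /
        (2 * Real.pi * Real.sqrt (t + 1) * pfun kf * Real.sqrt (‖kn‖ ^ 5)) : ℝ) : ℂ) *
      ((Real.sqrt ‖kf j‖ : ℂ)⁻¹ * prev (Fin.snoc (removeAt j kf) (p + kf j + kn)))

/-- The full recursion formula `χ_n = ∑_{j=1}^{n−1} χ_{n,j}` for `n = t + 2`. -/
def chiFormula (t : ℕ) (Dset : Set (Fin (t + 1) → R3)) (prev : (Fin (t + 1) → R3) → ℂ) :
    (Fin (t + 3) → R3) → ℂ :=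
  fun x => ∑ j : Fin (t + 1), chiTerm t Dset prev j x

/-- `χ ∈ W`, with lowest index `m` and admissible set `D = D_{m+1}`. -/
def IsW (m : ℕ) (D : Set (Fin (m + 1) → R3)) (χ : FockRep) : Prop :=
  memH χ ∧
  Fset m ⊆ D ∧ symmSet D = D ∧
  (∀ n, (¬ ∃ j : ℕ, n = m + 2 * j) → χ n = 0) ∧
  χ (m + 2) = chiFormula m D (χ m) ∧
  (∀ j : ℕ, χ (m + 2 * j + 4) = chiFormula (m + 2 * j + 2) ∅ (χ (m + 2 * j + 2))) ∧
  MemLp (AminusComp m (χ m)) 2 volume ∧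
  MemLp ((extendSet D).indicator (Aplus m (χ m))) 2 volume

/-- Membership in the linear span of `W`. -/
def inSpanW (φ : FockRep) : Prop :=
  ∃ (k : ℕ) (c : Fin k → ℂ) (χs : Fin k → FockRep),
    (∀ i, ∃ (m : ℕ) (D : Set (Fin (m + 1) → R3)), IsW m D (χs i)) ∧
    ∀ n x, φ n x = ∑ i, c i * χs i n x

/-- The shell `B_R ∖ B_{1/R} ⊆ ℝ³`. -/
def shellSet (R : ℝ) : Set R3 := {k | R⁻¹ ≤ ‖k‖ ∧ ‖k‖ < R}

/-- `(B_R ∖ B_{1/R})^n × ℝ³` as a subset of `(ℝ³)^{n+1}`. -/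
def cutSet (R : ℝ) (n : ℕ) : Set (Fin (n + 1) → R3) :=
  {x | ∀ i : Fin n, x i.castSucc ∈ shellSet R}

/-- The cut-off creation operator `Â^{R+}_m`. -/
def ARplus (R : ℝ) (m : ℕ) (ψ : (Fin (m + 1) → R3) → ℂ) : (Fin (m + 2) → R3) → ℂ :=
  (cutSet R (m + 1)).indicator (Aplus m ψ)

/-- The cut-off annihilation operator `Â^{R−}_{t+1}`. -/
def ARminus (R : ℝ) (t : ℕ) (ψ : (Fin (t + 2) → R3) → ℂ) : (Fin (t + 1) → R3) → ℂ :=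
  (cutSet R t).indicator (Aminus t ((cutSet R (t + 1)).indicator ψ))

/-- `p'_{N+1}(i₁,…,i_N) = e^{N+1} ∏_l (i_l² + 1)²`. -/
def pIdx (N : ℕ) (i : Fin N → ℕ) : ℝ :=
  Real.exp (N + 1) * ∏ l, ((i l : ℝ) ^ 2 + 1) ^ 2

/-- `X_{N,i} × ℝ³`: the product of spherical shells `i_l ≤ |k_l| < i_l + 1`
in the `k`-variables, with `p` free. -/
def Xshell (N : ℕ) (i : Fin N → ℕ) : Set (Fin (N + 1) → R3) :=
  {x | ∀ l : Fin N, (i l : ℝ) ≤ ‖x l.castSucc‖ ∧ ‖x l.castSucc‖ < (i l : ℝ) + 1}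

/-!
On `E_n` the variable `k_n` enters `χ_n` only through the radial weight `|k_n|^{-5/2}` and the
shifted momentum `p + k_j + k_n`, and annihilating at position `n` replaces `p` by `p - k_n`, so
the shift becomes `p + k_j`, exactly the argument in `Â⁺χ_{n-2}`. Hence `Â⁻_{n,n}χ_n` is
`Â⁺_{n-2}χ_{n-2}` times the integral of `|w|^{-3}` over the shell `e^{p_n/2} < |w| < e^{p_n}`,
which is `4π log (e^{p_n} / e^{p_n/2}) = 2π p_n`; the normalisation of `χ_n` turns this factor
into `-1_{D_{n-1}^∁}`.
-/

open Set Metric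

section Radial

variable {E : Type*} [NormedAddCommGroup E] [NormedSpace ℝ E] [FiniteDimensional ℝ E]
  [Nontrivial E] [MeasurableSpace E] [BorelSpace E] (μ : Measure E) [μ.IsAddHaarMeasure]

theorem integral_indicator_Ioo_norm_inv_pow_finrank {a b : ℝ} (ha : 0 < a) (hab : a ≤ b) :
    ∫ x, (Ioo a b).indicator (fun r => (r ^ Module.finrank ℝ E)⁻¹) ‖x‖ ∂μ
      = Module.finrank ℝ E * μ.real (ball 0 1) * (Real.log b - Real.log a) := by
  have hradial : EqOn (fun y => y ^ (Module.finrank ℝ E - 1) •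
      (Ioo a b).indicator (fun r => (r ^ Module.finrank ℝ E)⁻¹) y)
      ((Ioo a b).indicator fun y => y⁻¹) (Ioi 0) := by
    intro y (hy : 0 < y)
    by_cases hmem : y ∈ Ioo a b
    · simp only [indicator_of_mem hmem, smul_eq_mul]
      rw [← Nat.sub_add_cancel Module.finrank_pos, pow_succ, Nat.add_sub_cancel]
      field_simp
    · simp [hmem]
  rw [integral_fun_norm_addHaar, setIntegral_congr_fun measurableSet_Ioi hradial,
    setIntegral_indicator measurableSet_Ioo,
    inter_eq_self_of_subset_right (Ioo_subset_Ioi_self.trans (Ioi_subset_Ioi ha.le)),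
    ← integral_Ioc_eq_integral_Ioo,
    ← intervalIntegral.integral_of_le hab, integral_inv_of_pos ha (ha.trans_le hab),
    Real.log_div (ha.trans_le hab).ne' ha.ne', nsmul_eq_mul, smul_eq_mul, mul_assoc]

end Radial

theorem integral_indicator_Ioo_norm_inv_pow_three {a b : ℝ} (ha : 0 < a) (hab : a ≤ b) :
    ∫ w : R3, (Ioo a b).indicator (fun r => (r ^ 3)⁻¹) ‖w‖
      = 4 * Real.pi * (Real.log b - Real.log a) := by
  have h := integral_indicator_Ioo_norm_inv_pow_finrank (volume : Measure R3) ha hab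
  rw [finrank_euclideanSpace_fin] at h
  rw [h, measureReal_def, EuclideanSpace.volume_ball_fin_three, ENNReal.toReal_mul,
    ENNReal.toReal_ofReal (by positivity)]
  simp only [ENNReal.ofReal_one, one_pow, ENNReal.toReal_one, Nat.cast_ofNat]
  ring

theorem pfun_pos {n : ℕ} (k : Fin n → R3) : 0 < pfun k :=
  mul_pos (Real.exp_pos _) (Finset.prod_pos fun _ _ => by positivity)

theorem snoc_mem_Eset {n : ℕ} (k : Fin n → R3) (w : R3) :
    Fin.snoc k w ∈ Eset n ↔ ‖w‖ ∈ Ioo (Real.exp (pfun k / 2)) (Real.exp (pfun k)) := by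
  simp only [Eset, mem_ofPred_eq, Fin.snoc_castSucc, Fin.snoc_last, mem_Ioo]

section Cancellation

variable (t : ℕ) (D : Set (Fin (t + 1) → R3)) (prev : (Fin (t + 1) → R3) → ℂ)
  (x : Fin (t + 2) → R3)

theorem sum_inv_sqrt_mul_shift_eq_Aplus :
    ∑ j : Fin (t + 1), (Real.sqrt ‖x j.castSucc‖ : ℂ)⁻¹ *
        prev (Fin.snoc (removeAt j fun i : Fin (t + 1) => x i.castSucc)
          (x (Fin.last (t + 1)) + x j.castSucc))
      = Real.sqrt (t + 1) * Aplus t prev x := by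
  rw [Aplus, ← mul_assoc, mul_inv_cancel₀ (Complex.ofReal_ne_zero.2 (by positivity)), one_mul]

theorem inv_sqrt_norm_mul_chiFormula_snoc_snoc (w : R3) :
    (Real.sqrt ‖w‖ : ℂ)⁻¹ * chiFormula t D prev
        (Fin.snoc (Fin.snoc (fun i : Fin (t + 1) => x i.castSucc) w) (x (Fin.last (t + 1)) - w))
      = (((Ioo (Real.exp (pfun (fun i : Fin (t + 1) => x i.castSucc) / 2))
            (Real.exp (pfun (fun i : Fin (t + 1) => x i.castSucc)))).indicator
            (fun r => (r ^ 3)⁻¹) ‖w‖ : ℝ) : ℂ) *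
        ((-(Real.sqrt (t + 2) * Dᶜ.indicator (fun _ => 1) (fun i : Fin (t + 1) => x i.castSucc))
            / (2 * Real.pi * pfun (fun i : Fin (t + 1) => x i.castSucc)) : ℝ) *
          Aplus t prev x) := by
  have hshift : ∀ j : Fin (t + 1),
      x (Fin.last (t + 1)) - w + x j.castSucc + w = x (Fin.last (t + 1)) + x j.castSucc :=
    fun j => by abel
  simp only [chiFormula, chiTerm, Fin.snoc_castSucc, Fin.snoc_last, hshift]
  rw [← Finset.mul_sum, sum_inv_sqrt_mul_shift_eq_Aplus]
  by_cases hw : ‖w‖ ∈ Ioo (Real.exp (pfun (fun i : Fin (t + 1) => x i.castSucc) / 2))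
      (Real.exp (pfun (fun i : Fin (t + 1) => x i.castSucc)))
  · have hw0 : 0 < ‖w‖ := (Real.exp_pos _).trans hw.1
    have hsqrt : Real.sqrt ‖w‖ * Real.sqrt (‖w‖ ^ 5) = ‖w‖ ^ 3 := by
      rw [← Real.sqrt_mul hw0.le, show ‖w‖ * ‖w‖ ^ 5 = (‖w‖ ^ 3) ^ 2 by ring,
        Real.sqrt_sq (by positivity)]
    rw [indicator_of_mem ((snoc_mem_Eset _ _).2 hw), indicator_of_mem hw, ← hsqrt]
    push_cast
    field_simp
  · rw [indicator_of_notMem (mt (snoc_mem_Eset _ _).1 hw), indicator_of_notMem hw]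
    simp

theorem AminusL_last_chiFormula :
    AminusL (t + 1) (Fin.last (t + 1)) (chiFormula t D prev) x
      = -(extendSet D)ᶜ.indicator (Aplus t prev) x := by
  have hP := pfun_pos (fun i : Fin (t + 1) => x i.castSucc)
  have hsqrt : Real.sqrt ((t + 1 : ℕ) + 1) = Real.sqrt (t + 2) := by push_cast; ring_nf
  simp only [AminusL, Fin.insertNth_last', inv_sqrt_norm_mul_chiFormula_snoc_snoc,
    integral_mul_const]
  rw [integral_complex_ofReal, integral_indicator_Ioo_norm_inv_pow_three (Real.exp_pos _)
    (Real.exp_le_exp.2 (by linarith)), Real.log_exp, Real.log_exp, hsqrt]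
  by_cases hD : (fun i : Fin (t + 1) => x i.castSucc) ∈ D
  · rw [indicator_of_notMem (notMem_compl_iff.2 hD),
      indicator_of_notMem (show x ∉ (extendSet D)ᶜ from notMem_compl_iff.2 hD)]
    simp
  · have ht : (Real.sqrt (t + 2) : ℂ) ≠ 0 := Complex.ofReal_ne_zero.2 (by positivity)
    have hP' : (pfun (fun i : Fin (t + 1) => x i.castSucc) : ℂ) ≠ 0 :=
      Complex.ofReal_ne_zero.2 hP.ne'
    rw [indicator_of_mem (mem_compl hD), indicator_of_mem (show x ∈ (extendSet D)ᶜ from hD)]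
    push_cast
    field_simp
    ring

theorem AminusL_last_chiFormula_add_Aplus :
    AminusL (t + 1) (Fin.last (t + 1)) (chiFormula t D prev) x + Aplus t prev x
      = (extendSet D).indicator (Aplus t prev) x := by
  rw [AminusL_last_chiFormula, indicator_compl, Pi.sub_apply]
  ring

end Cancellation

theorem extendSet_empty (n : ℕ) : extendSet (∅ : Set (Fin n → R3)) = ∅ := rfl

/-- Exact cancellation: for `χ ∈ W` with lowest index `m`,
`Â⁻_{n,n}χ_n + Â⁺_{n−2}χ_{n−2} = 1_{D_{n−1}×ℝ³}·Â⁺_{n−2}χ_{n−2}` almost everywhere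
for `n = m + 2` (where `D_{n−1} = D`), and, since `D_{n−1} = ∅` for `n ≥ m + 4`,
`Â⁻_{n,n}χ_n + Â⁺_{n−2}χ_{n−2} = 0` almost everywhere for all `n = m + 2j + 4`. -/
theorem statement7 (m : ℕ) (D : Set (Fin (m + 1) → R3)) (χ : FockRep)
    (h : IsW m D χ) :
    (fun x => AminusL (m + 1) (Fin.last (m + 1)) (χ (m + 2)) x + Aplus m (χ m) x)
        =ᵐ[volume] (extendSet D).indicator (Aplus m (χ m)) ∧
    ∀ j : ℕ,
      (fun x => AminusL (m + 2 * j + 3) (Fin.last (m + 2 * j + 3)) (χ (m + 2 * j + 4)) x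
          + Aplus (m + 2 * j + 2) (χ (m + 2 * j + 2)) x) =ᵐ[volume] 0 := by
  obtain ⟨-, -, -, -, hχ₂, hχ₄, -, -⟩ := h
  refine ⟨.of_forall fun x => ?_, fun j => .of_forall fun x => ?_⟩
  · rw [hχ₂]
    exact AminusL_last_chiFormula_add_Aplus m D (χ m) x
  · dsimp only
    rw [hχ₄ j, AminusL_last_chiFormula_add_Aplus, extendSet_empty, indicator_empty]
    rfl

end
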